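/- For every cool stateful SOS specification L, trace equivalence, cost equivalence, and termination equivalence are congruences on the operational model γ^{L²} of the reader–writer extension L²: each of these three two-sorted equivalence relations on (readers, writers) is compatible with all constructors of L² (all operators f of Θ on readers, and [−]_s, ret_s, s.−, and each f̄ on writers). -/

import Mathlib

/-!
Each of the three equivalences is mutual one-sided simulation on trace entries: every observed
entry of the trace of `c` recurs in the trace of `c'` at a related position. Trace equivalence
observes all entries at the same position, cost equivalence only the final state at the same
position, termination equivalence only the final state at any position.

Compatibility with `ret_s` and `s.−` is immediate. The trace of `f̄(p⃗, c)` is that of `c`, whose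
final state is passed through the rule of `f` and, when the rule yields a term `t`, followed by
the trace of `[t]`. So compatibility with the `f̄` and with the operators of `Θ` both follow from
one statement, that substituting related readers into a term gives related readers. It is proved
by strong induction on the trace position: a substituted term only starts running after an
output (passive operator) or after the receiving argument has terminated (active operator), hence
at a smaller position.
-/
namespace RW

/-- A deterministic reader–writer transition system over a state set `S`:
`rstep p s = c` means `p,s → c`; `wstep c = .inl (d,s)` means `c →ˢ d`;
`wstep c = .inr (.inl d)` means `c → d`; `wstep c = .inr (.inr s)` means `c ↓ s`. -/
structure DRW (S : Type) where
  Rd : Type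
  Wr : Type
  rstep : Rd → S → Wr
  wstep : Wr → (Wr × S) ⊕ (Wr ⊕ S)

variable {S : Type}

/-- The output transition `c →ˢ d`. -/
def OutTr (M : DRW S) (c : M.Wr) (s : S) (d : M.Wr) : Prop := M.wstep c = .inl (d, s)

/-- The silent transition `c → d`. -/
def TauTr (M : DRW S) (c d : M.Wr) : Prop := M.wstep c = .inr (.inl d)

/-- The termination transition `c ↓ s`. -/
def DownTr (M : DRW S) (c : M.Wr) (s : S) : Prop := M.wstep c = .inr (.inr s)

/-- The weak silent transition `c ⇒ d`: a finite chain of silent steps. -/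
def WSil (M : DRW S) : M.Wr → M.Wr → Prop := Relation.ReflTransGen (TauTr M)

/-- The weak output transition `c ⇒ˢ d`: `c ⇒ c' →ˢ d` for some `c'`. -/
def WOut (M : DRW S) (c : M.Wr) (s : S) (d : M.Wr) : Prop :=
  ∃ c', WSil M c c' ∧ OutTr M c' s d

/-- The weak termination transition `c ⇓ s`: `c ⇒ c' ↓ s` for some `c'`. -/
def WDone (M : DRW S) (c : M.Wr) (s : S) : Prop :=
  ∃ c', WSil M c c' ∧ DownTr M c' s

/-- `ReachL M c l d`: from `c` there is a chain of weak output transitions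
producing the list `l` of states and ending in `d`. -/
def ReachL (M : DRW S) : M.Wr → List S → M.Wr → Prop
  | c, [], d => c = d
  | c, s :: l, d => ∃ c', WOut M c s c' ∧ ReachL M c' l d

/-- `TrcEntry M c n v` holds iff the `n`-th entry (0-indexed) of the trace
`trc^w(c)` is `v`, where `v = .inl s` tags an intermediate output state and
`v = .inr s` tags the final state of a finite trace. -/
def TrcEntry (M : DRW S) (c : M.Wr) (n : ℕ) (v : S ⊕ S) : Prop :=
  (∃ l d s d', ReachL M c l d ∧ l.length = n ∧ WOut M d s d' ∧ v = .inl s) ∨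
  (∃ l d s, ReachL M c l d ∧ l.length = n ∧ WDone M d s ∧ v = .inr s)

open Classical in
/-- The writer trace map `trc^w : X_w → 𝒮^∞`, with a (nonempty, finite or infinite)
trace encoded as a function `ℕ → Option (S ⊕ S)`: a finite trace `(s₁,…,sₙ,s)`
sends `0,…,n-1` to `some (.inl sᵢ₊₁)`, `n` to `some (.inr s)` and all larger
numbers to `none`; an infinite trace `(s₁,s₂,…)` sends each `n` to
`some (.inl sₙ₊₁)`. -/
noncomputable def trcW (M : DRW S) (c : M.Wr) : ℕ → Option (S ⊕ S) := fun n =>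
  if h : ∃ v, TrcEntry M c n v then some h.choose else none

/-- The reader trace map `trc^r : X_r → (𝒮^∞)^𝒮`: `trc^r(p)(s) = trc^w(c)` where
`p,s → c`. -/
noncomputable def trcR (M : DRW S) (p : M.Rd) (s : S) : ℕ → Option (S ⊕ S) :=
  trcW M (M.rstep p s)

open Classical in
/-- The writer cost map: `cstW M c = some (n,s)` iff `trc^w(c) = (s₁,…,sₙ,s)` is
finite, and `none` (i.e. `*`) iff `trc^w(c)` is infinite. -/
noncomputable def cstW (M : DRW S) (c : M.Wr) : Option (ℕ × S) :=
  if h : ∃ ns : ℕ × S, trcW M c ns.1 = some (.inr ns.2) then some h.choose else none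

/-- The reader cost map. -/
noncomputable def cstR (M : DRW S) (p : M.Rd) (s : S) : Option (ℕ × S) :=
  cstW M (M.rstep p s)

/-- The writer termination map: the last element of a finite trace, `none` (`*`)
for an infinite trace. -/
noncomputable def terW (M : DRW S) (c : M.Wr) : Option S := (cstW M c).map Prod.snd

/-- The reader termination map. -/
noncomputable def terR (M : DRW S) (p : M.Rd) (s : S) : Option S :=
  (cstR M p s).map Prod.snd

section Traces

variable {M : DRW S} {c d d' x y : M.Wr} {s s' : S} {n n' : ℕ} {v v' : S ⊕ S}

theorem TauTr.unique (h : TauTr M c d) (h' : TauTr M c d') : d = d' := by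
  rw [TauTr, h, Sum.inr.injEq, Sum.inl.injEq] at h'
  exact h'

theorem OutTr.not_tauTr (h : OutTr M c s d) : ¬ TauTr M c x := by
  rw [TauTr, h]
  simp

theorem DownTr.not_tauTr (h : DownTr M c s) : ¬ TauTr M c x := by
  rw [TauTr, h]
  simp

theorem OutTr.wOut (h : OutTr M c s d) : WOut M c s d := ⟨c, .refl, h⟩

theorem DownTr.wDone (h : DownTr M c s) : WDone M c s := ⟨c, .refl, h⟩

theorem visible_step_unique {u u' : (M.Wr × S) ⊕ (M.Wr ⊕ S)} (hx : WSil M c x)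
    (hy : WSil M c y) (hxu : M.wstep x = u) (hyu : M.wstep y = u')
    (hu : ∀ z, u ≠ .inr (.inl z)) (hu' : ∀ z, u' ≠ .inr (.inl z)) : u = u' := by
  subst hxu hyu
  induction hx using Relation.ReflTransGen.head_induction_on with
  | refl =>
    rcases hy.cases_head with rfl | ⟨z, hz, -⟩
    · rfl
    · exact absurd hz (hu z)
  | head hcz _ ih =>
    rcases hy.cases_head with rfl | ⟨z, hz, hzy⟩
    · exact absurd hcz (hu' _)
    · exact ih (hcz.unique hz ▸ hzy)

theorem WOut.unique (h : WOut M c s d) (h' : WOut M c s' d') : s = s' ∧ d = d' := by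
  obtain ⟨x, hx, hxd⟩ := h
  obtain ⟨y, hy, hyd⟩ := h'
  simpa [and_comm] using visible_step_unique hx hy hxd hyd (by simp) (by simp)

theorem WDone.unique (h : WDone M c s) (h' : WDone M c s') : s = s' := by
  obtain ⟨x, hx, hxd⟩ := h
  obtain ⟨y, hy, hyd⟩ := h'
  simpa using visible_step_unique hx hy hxd hyd (by simp) (by simp)

theorem WOut.not_wDone (h : WOut M c s d) : ¬ WDone M c s' := by
  obtain ⟨x, hx, hxd⟩ := h
  rintro ⟨y, hy, hyd⟩
  simpa using visible_step_unique hx hy hxd hyd (by simp) (by simp)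

theorem trcEntry_zero :
    TrcEntry M c 0 v ↔ (∃ s d, WOut M c s d ∧ v = .inl s) ∨ (∃ s, WDone M c s ∧ v = .inr s) := by
  constructor
  · rintro (⟨l, d, s, d', hr, hl, ho, rfl⟩ | ⟨l, d, s, hr, hl, hd, rfl⟩) <;>
      obtain rfl := List.length_eq_zero_iff.1 hl <;> cases hr
    · exact Or.inl ⟨s, d', ho, rfl⟩
    · exact Or.inr ⟨s, hd, rfl⟩
  · rintro (⟨s, d, ho, rfl⟩ | ⟨s, hd, rfl⟩)
    · exact Or.inl ⟨[], c, s, d, rfl, rfl, ho, rfl⟩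
    · exact Or.inr ⟨[], c, s, rfl, rfl, hd, rfl⟩

theorem trcEntry_succ : TrcEntry M c (n + 1) v ↔ ∃ s d, WOut M c s d ∧ TrcEntry M d n v := by
  constructor
  · rintro (⟨_ | ⟨s₀, l⟩, e, s, e', hr, hl, ho, rfl⟩ | ⟨_ | ⟨s₀, l⟩, e, s, hr, hl, he, rfl⟩) <;>
      simp only [List.length_nil, List.length_cons, Nat.right_eq_add, Nat.add_eq_zero_iff,
        one_ne_zero, and_false, Nat.add_right_cancel_iff] at hl
    · obtain ⟨d, hd, hr⟩ := hr
      exact ⟨s₀, d, hd, Or.inl ⟨l, e, s, e', hr, hl, ho, rfl⟩⟩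
    · obtain ⟨d, hd, hr⟩ := hr
      exact ⟨s₀, d, hd, Or.inr ⟨l, e, s, hr, hl, he, rfl⟩⟩
  · rintro ⟨s₀, d, hd, ⟨l, e, s, e', hr, rfl, ho, rfl⟩ | ⟨l, e, s, hr, rfl, he, rfl⟩⟩
    · exact Or.inl ⟨s₀ :: l, e, s, e', ⟨d, hd, hr⟩, rfl, ho, rfl⟩
    · exact Or.inr ⟨s₀ :: l, e, s, ⟨d, hd, hr⟩, rfl, he, rfl⟩

theorem trcEntry_zero_inl : TrcEntry M c 0 (.inl s) ↔ ∃ d, WOut M c s d := by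
  simp [trcEntry_zero]

theorem trcEntry_zero_inr : TrcEntry M c 0 (.inr s) ↔ WDone M c s := by
  simp [trcEntry_zero]

theorem TrcEntry.unique (h : TrcEntry M c n v) (h' : TrcEntry M c n v') : v = v' := by
  induction n generalizing c with
  | zero =>
    rcases trcEntry_zero.1 h with ⟨s, d, hs, rfl⟩ | ⟨s, hs, rfl⟩ <;>
      rcases trcEntry_zero.1 h' with ⟨s', d', hs', rfl⟩ | ⟨s', hs', rfl⟩
    · rw [(hs.unique hs').1]
    · exact (hs.not_wDone hs').elim
    · exact (hs'.not_wDone hs).elim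
    · rw [hs.unique hs']
  | succ n ih =>
    obtain ⟨s, d, hs, hd⟩ := trcEntry_succ.1 h
    obtain ⟨s', d', hs', hd'⟩ := trcEntry_succ.1 h'
    obtain ⟨-, rfl⟩ := hs.unique hs'
    exact ih hd hd'

theorem TrcEntry.index_unique (h : TrcEntry M c n (.inr s)) (h' : TrcEntry M c n' (.inr s')) :
    n = n' := by
  induction n generalizing c n' with
  | zero =>
    obtain _ | n' := n'
    · rfl
    obtain ⟨_, _, hout, -⟩ := trcEntry_succ.1 h'
    exact (hout.not_wDone (trcEntry_zero_inr.1 h)).elim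
  | succ n ih =>
    obtain ⟨_, d, hout, hd⟩ := trcEntry_succ.1 h
    obtain _ | n' := n'
    · exact (hout.not_wDone (trcEntry_zero_inr.1 h')).elim
    obtain ⟨_, d', hout', hd'⟩ := trcEntry_succ.1 h'
    obtain ⟨-, rfl⟩ := hout.unique hout'
    rw [ih hd hd']

theorem trcW_eq_some_iff : trcW M c n = some v ↔ TrcEntry M c n v := by
  unfold trcW
  split_ifs with h
  · exact ⟨fun hv => Option.some_injective _ hv ▸ h.choose_spec,
      fun hv => congrArg some (h.choose_spec.unique hv)⟩
  · exact ⟨False.elim, fun hv => h ⟨v, hv⟩⟩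

theorem cstW_eq_some_iff : cstW M c = some (n, s) ↔ TrcEntry M c n (.inr s) := by
  unfold cstW
  split_ifs with h
  · have hspec := trcW_eq_some_iff.1 h.choose_spec
    rw [Option.some_inj]
    refine ⟨fun hv => by rwa [hv] at hspec, fun hv => Prod.ext (hspec.index_unique hv) ?_⟩
    rw [hspec.index_unique hv] at hspec
    simpa using hspec.unique hv
  · exact ⟨False.elim, fun hv => h ⟨(n, s), trcW_eq_some_iff.2 hv⟩⟩

theorem terW_eq_some_iff : terW M c = some s ↔ ∃ n, TrcEntry M c n (.inr s) := by
  simp [terW, cstW_eq_some_iff]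

theorem wSil_iff_of_tauTr (h : TauTr M c d) (hx : ∀ z, ¬ TauTr M x z) :
    WSil M c x ↔ WSil M d x := by
  refine ⟨fun hcx => ?_, .head h⟩
  rcases hcx.cases_head with rfl | ⟨z, hz, hzx⟩
  · exact absurd h (hx d)
  · exact h.unique hz ▸ hzx

theorem wOut_iff_of_tauTr (h : TauTr M c d) : WOut M c s x ↔ WOut M d s x :=
  exists_congr fun _ => and_congr_left fun ho => wSil_iff_of_tauTr h fun _ => ho.not_tauTr

theorem wDone_iff_of_tauTr (h : TauTr M c d) : WDone M c s ↔ WDone M d s :=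
  exists_congr fun _ => and_congr_left fun ho => wSil_iff_of_tauTr h fun _ => ho.not_tauTr

theorem trcEntry_iff_of_tauTr (h : TauTr M c d) : TrcEntry M c n v ↔ TrcEntry M d n v := by
  cases n <;> simp only [trcEntry_zero, trcEntry_succ, wOut_iff_of_tauTr h, wDone_iff_of_tauTr h]

theorem trcEntry_zero_of_outTr (h : OutTr M c s d) : TrcEntry M c 0 v ↔ v = .inl s := by
  rw [trcEntry_zero]
  constructor
  · rintro (⟨s', d', ho, rfl⟩ | ⟨s', hd, rfl⟩)
    · rw [(h.wOut.unique ho).1]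
    · exact (h.wOut.not_wDone hd).elim
  · rintro rfl
    exact Or.inl ⟨s, d, h.wOut, rfl⟩

theorem trcEntry_succ_of_outTr (h : OutTr M c s d) :
    TrcEntry M c (n + 1) v ↔ TrcEntry M d n v := by
  rw [trcEntry_succ]
  refine ⟨fun ⟨s', d', ho, hd⟩ => ?_, fun hd => ⟨s, d, h.wOut, hd⟩⟩
  obtain ⟨-, rfl⟩ := h.wOut.unique ho
  exact hd

theorem trcEntry_of_downTr (h : DownTr M c s) : TrcEntry M c n v ↔ n = 0 ∧ v = .inr s := by
  cases n with
  | zero =>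
    rw [trcEntry_zero]
    constructor
    · rintro (⟨s', d', ho, rfl⟩ | ⟨s', hd, rfl⟩)
      · exact (ho.not_wDone h.wDone).elim
      · rw [hd.unique h.wDone]
        exact ⟨rfl, rfl⟩
    · rintro ⟨-, rfl⟩
      exact Or.inr ⟨s, h.wDone, rfl⟩
  | succ n =>
    simp only [trcEntry_succ, Nat.add_one_ne_zero, false_and, iff_false, not_exists, not_and]
    exact fun _ _ ho => (ho.not_wDone h.wDone).elim

theorem trcW_eq_of_tauTr (h : TauTr M c d) : trcW M c = trcW M d := by
  ext n v
  simp only [trcW_eq_some_iff, trcEntry_iff_of_tauTr h]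

theorem cstW_eq_of_tauTr (h : TauTr M c d) : cstW M c = cstW M d := by
  unfold cstW
  rw [trcW_eq_of_tauTr h]

theorem terW_eq_of_tauTr (h : TauTr M c d) : terW M c = terW M d := by
  rw [terW, terW, cstW_eq_of_tauTr h]

end Traces

/-- What an observer of traces sees: the entries satisfying `Visible`, at positions known only up
to `Shift`. -/
structure Observation (S : Type) where
  Visible : S ⊕ S → Prop
  Shift : ℕ → ℕ → Prop
  visible_inr : ∀ s, Visible (.inr s)
  shift_zero : Shift 0 0
  shift_add : ∀ {k k' l l'}, Shift k k' → Shift l l' → Shift (k + 1 + l) (k' + 1 + l')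

namespace Observation

variable (ob : Observation S) (M : DRW S) {c c' d d' : M.Wr} {s : S} {n : ℕ}

def SimAt (n : ℕ) (c c' : M.Wr) : Prop :=
  ∀ w, ob.Visible w → TrcEntry M c n w → ∃ n', ob.Shift n n' ∧ TrcEntry M c' n' w

def Sim (c c' : M.Wr) : Prop := ∀ n, ob.SimAt M n c c'

def trace : Observation S where
  Visible _ := True
  Shift := Eq
  visible_inr _ := trivial
  shift_zero := rfl
  shift_add := by rintro _ _ _ _ rfl rfl; rfl

def cost : Observation S where
  Visible w := w.isRight
  Shift := Eq
  visible_inr _ := rfl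
  shift_zero := rfl
  shift_add := by rintro _ _ _ _ rfl rfl; rfl

def termination : Observation S where
  Visible w := w.isRight
  Shift _ _ := True
  visible_inr _ := rfl
  shift_zero := trivial
  shift_add _ _ := trivial

variable {ob M}

theorem trcW_eq_iff : trcW M c = trcW M c' ↔ trace.Sim M c c' ∧ trace.Sim M c' c := by
  rw [funext_iff, forall_congr' fun _ => Option.ext_iff]
  simp only [trcW_eq_some_iff, Sim, SimAt, trace, exists_eq_left', forall_const, ← forall_and,
    iff_def]

theorem cstW_eq_iff : cstW M c = cstW M c' ↔ cost.Sim M c c' ∧ cost.Sim M c' c := by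
  rw [Option.ext_iff]
  simp [Prod.forall, cstW_eq_some_iff, Sim, SimAt, cost, ← forall_and, iff_def]

theorem terW_eq_iff : terW M c = terW M c' ↔ termination.Sim M c c' ∧ termination.Sim M c' c := by
  rw [Option.ext_iff]
  simp only [terW_eq_some_iff, iff_def, forall_exists_index, ← forall_and, Sim, SimAt, termination,
    true_and, Sum.forall, Sum.isRight_inl, Bool.false_eq_true, IsEmpty.forall_iff, implies_true,
    Sum.isRight_inr, forall_const]
  exact ⟨fun h n a => h a n, fun h a n => h n a⟩

theorem simAt_iff_of_tauTr (h : TauTr M c d) (h' : TauTr M c' d') :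
    ob.SimAt M n c c' ↔ ob.SimAt M n d d' := by
  simp only [SimAt, trcEntry_iff_of_tauTr h, trcEntry_iff_of_tauTr h']

theorem simAt_zero_of_outTr (h : OutTr M c s d) (h' : OutTr M c' s d') : ob.SimAt M 0 c c' :=
  fun _ _ hw => ⟨0, ob.shift_zero, (trcEntry_zero_of_outTr h').2 ((trcEntry_zero_of_outTr h).1 hw)⟩

theorem simAt_succ_of_outTr (h : OutTr M c s d) (h' : OutTr M c' s d') (hd : ob.SimAt M n d d') :
    ob.SimAt M (n + 1) c c' := fun w hv hw => by
  obtain ⟨n', hn, hw'⟩ := hd w hv ((trcEntry_succ_of_outTr h).1 hw)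
  exact ⟨n' + 1, ob.shift_add hn ob.shift_zero, (trcEntry_succ_of_outTr h').2 hw'⟩

theorem sim_of_outTr (h : OutTr M c s d) (h' : OutTr M c' s d') (hd : ob.Sim M d d') :
    ob.Sim M c c'
  | 0 => simAt_zero_of_outTr h h'
  | n + 1 => simAt_succ_of_outTr h h' (hd n)

theorem simAt_of_downTr (h : DownTr M c s) (h' : DownTr M c' s) : ob.SimAt M n c c' :=
  fun _ _ hw => by
  obtain ⟨rfl, rfl⟩ := (trcEntry_of_downTr h).1 hw
  exact ⟨0, ob.shift_zero, (trcEntry_of_downTr h').2 ⟨rfl, rfl⟩⟩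

end Observation

end RW
namespace SOS

/-- Terms over a single-sorted algebraic signature with operation symbols `O` of
arities `ar`, with variables from `V`. -/
inductive OTm (O : Type) (ar : O → ℕ) (V : Type) : Type
  | var : V → OTm O ar V
  | op : (f : O) → (Fin (ar f) → OTm O ar V) → OTm O ar V

/-- Closed terms over the signature. -/
abbrev Tm (O : Type) (ar : O → ℕ) : Type := OTm O ar Empty

variable {O : Type} {ar : O → ℕ} {S : Type}

/-- Substitution of terms for variables. -/
def OTm.subst {V V' : Type} : OTm O ar V → (V → OTm O ar V') → OTm O ar V'
  | .var v, σ => σ v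
  | .op f as, σ => .op f (fun i => (as i).subst σ)

/-- A cool stateful SOS specification over the signature `(O, ar)` and the state
set `S`, presented by its defining data.  For each operator `f`, either

* `f` is passive, given by the map `o : S → (t,s') ⊕ s'` assigning to the current
  state `s` the conclusion of the (unique, premise-free) rule for `f` at `s`:
  either a transition `f(x₁,…,xₙ),s → t,s'` with `t` a term over the variables
  `x₁,…,xₙ`, or a termination `f(x₁,…,xₙ),s ↓ s'`; or
* `f` is active with receiving position `j`, and its rules are the patience rules
  `x_j,s → y_j,s'  ⊢  f(x₁,…,x_j,…,xₙ),s → f(x₁,…,y_j,…,xₙ),s'` together with the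
  rules `x_j,s ↓ s'  ⊢  f(x₁,…,xₙ),s → t,s''` resp. `f(x₁,…,xₙ),s ↓ s''` whose
  conclusion `o s' = (t,s'') ⊕ s''` depends only on `s'` (not on `s`), where `t`
  is a term over the variables `x₁,…,xₙ` other than `x_j`. -/
structure CoolSpec (O : Type) (ar : O → ℕ) (S : Type) where
  mode : (f : O) →
    (S → (OTm O ar (Fin (ar f)) × S) ⊕ S) ⊕
    (Σ j : Fin (ar f), S → (OTm O ar {i : Fin (ar f) // i ≠ j} × S) ⊕ S)

/-- Update of an argument tuple at position `j`. -/
def updFn {f : O} (as : Fin (ar f) → Tm O ar) (j : Fin (ar f)) (p : Tm O ar) :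
    Fin (ar f) → Tm O ar :=
  fun i => if i = j then p else as i

/-- The operational model `γ^L` of the stateful SOS specification determined by a
cool specification: `stepL C p s = .inl (p',s')` means `p,s → p',s'`, and
`stepL C p s = .inr s'` means `p,s ↓ s'`. -/
def stepL (C : CoolSpec O ar S) : Tm O ar → S → (Tm O ar × S) ⊕ S
  | .var v, _ => nomatch v
  | .op f as, s =>
    match C.mode f with
    | .inl o =>
        match o s with
        | .inl (t, s') => .inl (t.subst (fun i => as i), s')
        | .inr s' => .inr s'
    | .inr ⟨j, o⟩ =>
        match stepL C (as j) s with
        | .inl (p', s') => .inl (.op f (updFn as j p'), s')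
        | .inr s' =>
            match o s' with
            | .inl (t, s'') => .inl (t.subst (fun i => as i.1), s'')
            | .inr s'' => .inr s''

/-- Writers of the reader–writer extension `L²` of a cool specification `C`.
Readers are the closed `Θ`-terms. -/
inductive WTm (C : CoolSpec O ar S) : Type
  /-- The writer `[p]_s`. -/
  | run : Tm O ar → S → WTm C
  /-- The writer `ret_s`. -/
  | ret : S → WTm C
  /-- The writer `s.c`. -/
  | out : S → WTm C → WTm C
  /-- The writer `f̄(p₁,…,c,…,pₙ)` for an active operator `f` with receiving
  position `j` (with the writer argument in position `j`). -/
  | act : (f : O) → (j : Fin (ar f)) →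
      (o : S → (OTm O ar {i : Fin (ar f) // i ≠ j} × S) ⊕ S) →
      C.mode f = .inr ⟨j, o⟩ →
      ({i : Fin (ar f) // i ≠ j} → Tm O ar) → WTm C → WTm C

/-- The reader semantics of `L²`: `rstep2 C p s` is the unique writer `c` with
`p,s → c`. -/
def rstep2 (C : CoolSpec O ar S) (t : Tm O ar) (s : S) : WTm C :=
  match t with
  | .var v => nomatch v
  | .op f as =>
    match h : C.mode f with
    | .inl o =>
        match o s with
        | .inl (t', s') => .out s' (.run (t'.subst (fun i => as i)) s')
        | .inr s' => .ret s'
    | .inr ⟨j, o⟩ => .act f j o h (fun i => as i.1) (.run (as j) s)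

/-- The writer semantics of `L²`: `wstep2 C c = .inl (d,s)` means `c →ˢ d`,
`wstep2 C c = .inr (.inl d)` means `c → d`, and `wstep2 C c = .inr (.inr s)` means
`c ↓ s`. -/
def wstep2 (C : CoolSpec O ar S) : WTm C → (WTm C × S) ⊕ (WTm C ⊕ S)
  | .run p s => .inr (.inl (rstep2 C p s))
  | .ret s => .inr (.inr s)
  | .out s c => .inl (c, s)
  | .act f j o h ps c =>
      match wstep2 C c with
      | .inl (d, s) => .inl (.act f j o h ps d, s)
      | .inr (.inl d) => .inr (.inl (.act f j o h ps d))
      | .inr (.inr s') =>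
          match o s' with
          | .inl (t, s'') => .inl (.run (t.subst (fun i => ps i)) s'', s'')
          | .inr s'' => .inr (.inr s'')

/-- The operational model `γ^{L²}` of the reader–writer extension `L²` as a
deterministic reader–writer transition system. -/
def L2Model (C : CoolSpec O ar S) : RW.DRW S where
  Rd := Tm O ar
  Wr := WTm C
  rstep := rstep2 C
  wstep := wstep2 C

end SOS

namespace SOS

open RW

variable {O : Type} {ar : O → ℕ} {S : Type}

/-- A two-sorted relation on (readers, writers) of `L²` is a congruence if it is
compatible with all constructors of `L²`: all operators `f` of `Θ` on readers, and
the writer constructors `[−]_s`, `ret_s`, `s.−` and each `f̄`. -/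
def IsCongrL2 (C : CoolSpec O ar S) (Er : Tm O ar → Tm O ar → Prop)
    (Ew : WTm C → WTm C → Prop) : Prop :=
  (∀ (f : O) (as as' : Fin (ar f) → Tm O ar),
      (∀ i, Er (as i) (as' i)) → Er (.op f as) (.op f as')) ∧
  (∀ (p p' : Tm O ar) (s : S), Er p p' → Ew (.run p s) (.run p' s)) ∧
  (∀ s : S, Ew (.ret s) (.ret s)) ∧
  (∀ (s : S) (c c' : WTm C), Ew c c' → Ew (.out s c) (.out s c')) ∧
  (∀ (f : O) (j : Fin (ar f)) o (h : C.mode f = .inr ⟨j, o⟩)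
      (ps ps' : {i : Fin (ar f) // i ≠ j} → Tm O ar) (c c' : WTm C),
      (∀ i, Er (ps i) (ps' i)) → Ew c c' →
      Ew (.act f j o h ps c) (.act f j o h ps' c'))

theorem OTm.subst_subst {V V' V'' : Type} (t : OTm O ar V) (τ : V → OTm O ar V')
    (σ : V' → OTm O ar V'') : (t.subst τ).subst σ = t.subst fun v => (τ v).subst σ := by
  induction t with
  | var v => rfl
  | op f as ih => exact congrArg (OTm.op f) (funext ih)

section L2

variable {C : CoolSpec O ar S} {f : O} {as : Fin (ar f) → Tm O ar} {s s' : S}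

theorem tauTr_run (p : Tm O ar) (s : S) : TauTr (L2Model C) (.run p s) (rstep2 C p s) := rfl

theorem rstep2_op_of_passive_out {o : S → (OTm O ar (Fin (ar f)) × S) ⊕ S}
    (hf : C.mode f = .inl o) {t : OTm O ar (Fin (ar f))} (ho : o s = .inl (t, s')) :
    rstep2 C (.op f as) s = .out s' (.run (t.subst as) s') := by
  rw [rstep2]
  split <;> simp_all

theorem rstep2_op_of_passive_ret {o : S → (OTm O ar (Fin (ar f)) × S) ⊕ S}
    (hf : C.mode f = .inl o) (ho : o s = .inr s') : rstep2 C (.op f as) s = .ret s' := by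
  rw [rstep2]
  split <;> simp_all

theorem rstep2_op_of_active {j : Fin (ar f)} {o : S → (OTm O ar {i // i ≠ j} × S) ⊕ S}
    (hf : C.mode f = .inr ⟨j, o⟩) :
    rstep2 C (.op f as) s = .act f j o hf (fun i => as i.1) (.run (as j) s) := by
  rw [rstep2]
  split
  · simp_all
  · next j' o' hf' =>
    rw [hf, Sum.inr.injEq, Sigma.mk.inj_iff] at hf'
    obtain ⟨rfl, ⟨⟩⟩ := hf'
    rfl

variable {j : Fin (ar f)} {o : S → (OTm O ar {i // i ≠ j} × S) ⊕ S}
  {h : C.mode f = .inr ⟨j, o⟩} {ps : {i // i ≠ j} → Tm O ar} {c x : WTm C}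

theorem tauTr_act_iff : TauTr (L2Model C) (.act f j o h ps c) x ↔
    ∃ d, TauTr (L2Model C) c d ∧ x = .act f j o h ps d := by
  simp only [TauTr, L2Model, wstep2]
  split <;> try split
  all_goals simp_all [eq_comm]

theorem outTr_act_iff : OutTr (L2Model C) (.act f j o h ps c) s x ↔
    (∃ d, OutTr (L2Model C) c s d ∧ x = .act f j o h ps d) ∨
    (∃ s' t, DownTr (L2Model C) c s' ∧ o s' = .inl (t, s) ∧ x = .run (t.subst ps) s) := by
  simp only [OutTr, DownTr, L2Model, wstep2]
  split <;> try split
  all_goals simp_all [eq_comm, and_comm]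

theorem downTr_act_iff : DownTr (L2Model C) (.act f j o h ps c) s ↔
    ∃ s', DownTr (L2Model C) c s' ∧ o s' = .inr s := by
  simp only [DownTr, L2Model, wstep2]
  split <;> try split
  all_goals simp_all [eq_comm]

theorem wSil_act_iff : WSil (L2Model C) (.act f j o h ps c) x ↔
    ∃ d, WSil (L2Model C) c d ∧ x = .act f j o h ps d := by
  constructor
  · generalize hy : WTm.act f j o h ps c = y
    intro hyx
    induction hyx using Relation.ReflTransGen.head_induction_on generalizing c with
    | refl => exact ⟨c, .refl, hy.symm⟩
    | head hyz _ ih =>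
      subst hy
      obtain ⟨d, hcd, rfl⟩ := tauTr_act_iff.1 hyz
      obtain ⟨e, hde, rfl⟩ := ih rfl
      exact ⟨e, .head hcd hde, rfl⟩
  · rintro ⟨d, hcd, rfl⟩
    induction hcd with
    | refl => exact .refl
    | tail _ hde ih => exact ih.tail (tauTr_act_iff.2 ⟨_, hde, rfl⟩)

theorem wOut_act_iff : WOut (L2Model C) (.act f j o h ps c) s x ↔
    (∃ d, WOut (L2Model C) c s d ∧ x = .act f j o h ps d) ∨
    (∃ s' t, WDone (L2Model C) c s' ∧ o s' = .inl (t, s) ∧ x = .run (t.subst ps) s) := by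
  constructor
  · rintro ⟨y, hy, hyx⟩
    obtain ⟨d, hcd, rfl⟩ := wSil_act_iff.1 hy
    rcases outTr_act_iff.1 hyx with ⟨e, hde, rfl⟩ | ⟨s', t, hd, ho, rfl⟩
    · exact .inl ⟨e, ⟨d, hcd, hde⟩, rfl⟩
    · exact .inr ⟨s', t, ⟨d, hcd, hd⟩, ho, rfl⟩
  · rintro (⟨e, ⟨d, hcd, hde⟩, rfl⟩ | ⟨s', t, ⟨d, hcd, hd⟩, ho, rfl⟩)
    · exact ⟨_, wSil_act_iff.2 ⟨d, hcd, rfl⟩, outTr_act_iff.2 (.inl ⟨e, hde, rfl⟩)⟩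
    · exact ⟨_, wSil_act_iff.2 ⟨d, hcd, rfl⟩, outTr_act_iff.2 (.inr ⟨s', t, hd, ho, rfl⟩)⟩

theorem wDone_act_iff : WDone (L2Model C) (.act f j o h ps c) s ↔
    ∃ s', WDone (L2Model C) c s' ∧ o s' = .inr s := by
  constructor
  · rintro ⟨y, hy, hys⟩
    obtain ⟨d, hcd, rfl⟩ := wSil_act_iff.1 hy
    obtain ⟨s', hd, ho⟩ := downTr_act_iff.1 hys
    exact ⟨s', ⟨d, hcd, hd⟩, ho⟩
  · rintro ⟨s', ⟨d, hcd, hd⟩, ho⟩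
    exact ⟨_, wSil_act_iff.2 ⟨d, hcd, rfl⟩, downTr_act_iff.2 ⟨s', hd, ho⟩⟩

theorem trcEntry_act_iff {m : ℕ} {w : S ⊕ S} :
    TrcEntry (L2Model C) (.act f j o h ps c) m w ↔
      (∃ s, TrcEntry (L2Model C) c m (.inl s) ∧ w = .inl s) ∨
      (∃ s', TrcEntry (L2Model C) c m (.inr s') ∧ w = (o s').map Prod.snd id) ∨
      (∃ k l s' t s'', m = k + 1 + l ∧ TrcEntry (L2Model C) c k (.inr s') ∧
        o s' = .inl (t, s'') ∧ TrcEntry (L2Model C) (.run (t.subst ps) s'') l w) := by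
  induction m generalizing c with
  | zero =>
    refine trcEntry_zero.trans ⟨?_, ?_⟩
    · rintro (⟨s, x, hx, rfl⟩ | ⟨s, hs, rfl⟩)
      · rcases wOut_act_iff.1 hx with ⟨d, hd, rfl⟩ | ⟨s', t, hd, ho, rfl⟩
        · exact .inl ⟨s, trcEntry_zero_inl.2 ⟨d, hd⟩, rfl⟩
        · exact .inr (.inl ⟨s', trcEntry_zero_inr.2 hd, by simp [ho]⟩)
      · obtain ⟨s', hd, ho⟩ := wDone_act_iff.1 hs
        exact .inr (.inl ⟨s', trcEntry_zero_inr.2 hd, by simp [ho]⟩)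
    · rintro (⟨s, hs, rfl⟩ | ⟨s', hs, rfl⟩ | ⟨k, l, -, -, -, hkl, -⟩)
      · obtain ⟨d, hd⟩ := trcEntry_zero_inl.1 hs
        exact .inl ⟨s, _, wOut_act_iff.2 (.inl ⟨d, hd, rfl⟩), rfl⟩
      · rcases ho : o s' with ⟨t, s''⟩ | s''
        · exact .inl ⟨s'', _, wOut_act_iff.2 (.inr ⟨s', t, trcEntry_zero_inr.1 hs, ho, rfl⟩), rfl⟩
        · exact .inr ⟨s'', wDone_act_iff.2 ⟨s', trcEntry_zero_inr.1 hs, ho⟩, rfl⟩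
      · omega
  | succ m ih =>
    refine trcEntry_succ.trans ⟨?_, ?_⟩
    · rintro ⟨s, x, hx, hxm⟩
      rcases wOut_act_iff.1 hx with ⟨d, hd, rfl⟩ | ⟨s', t, hd, ho, rfl⟩
      · rcases ih.1 hxm with ⟨s₁, h1, rfl⟩ | ⟨s', h1, rfl⟩ | ⟨k, l, s', t, s'', rfl, h1, ho, h2⟩
        · exact .inl ⟨s₁, trcEntry_succ.2 ⟨s, d, hd, h1⟩, rfl⟩
        · exact .inr (.inl ⟨s', trcEntry_succ.2 ⟨s, d, hd, h1⟩, rfl⟩)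
        · exact .inr (.inr ⟨k + 1, l, s', t, s'', by omega, trcEntry_succ.2 ⟨s, d, hd, h1⟩, ho, h2⟩)
      · exact .inr (.inr ⟨0, m, s', t, s, by omega, trcEntry_zero_inr.2 hd, ho, hxm⟩)
    · rintro (⟨s₁, h1, rfl⟩ | ⟨s', h1, rfl⟩ | ⟨_ | k, l, s', t, s'', hm, h1, ho, h2⟩)
      · obtain ⟨s, d, hd, h1⟩ := trcEntry_succ.1 h1
        exact ⟨s, _, wOut_act_iff.2 (.inl ⟨d, hd, rfl⟩), ih.2 (.inl ⟨s₁, h1, rfl⟩)⟩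
      · obtain ⟨s, d, hd, h1⟩ := trcEntry_succ.1 h1
        exact ⟨s, _, wOut_act_iff.2 (.inl ⟨d, hd, rfl⟩), ih.2 (.inr (.inl ⟨s', h1, rfl⟩))⟩
      · obtain rfl : l = m := by omega
        exact ⟨s'', _, wOut_act_iff.2 (.inr ⟨s', t, trcEntry_zero_inr.1 h1, ho, rfl⟩), h2⟩
      · obtain ⟨s, d, hd, h1⟩ := trcEntry_succ.1 h1
        exact ⟨s, _, wOut_act_iff.2 (.inl ⟨d, hd, rfl⟩),
          ih.2 (.inr (.inr ⟨k, l, s', t, s'', by omega, h1, ho, h2⟩))⟩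

theorem trcR_eq_trcW_run (p : Tm O ar) (s : S) :
    trcR (L2Model C) p s = trcW (L2Model C) (.run p s) :=
  (trcW_eq_of_tauTr (tauTr_run p s)).symm

theorem cstR_eq_cstW_run (p : Tm O ar) (s : S) :
    cstR (L2Model C) p s = cstW (L2Model C) (.run p s) :=
  (cstW_eq_of_tauTr (tauTr_run p s)).symm

theorem terR_eq_terW_run (p : Tm O ar) (s : S) :
    terR (L2Model C) p s = terW (L2Model C) (.run p s) :=
  (terW_eq_of_tauTr (tauTr_run p s)).symm

end L2

section Congruence

open Observation

variable {C : CoolSpec O ar S} {ob : Observation S}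

theorem simAt_act {f : O} {j : Fin (ar f)} {o : S → (OTm O ar {i // i ≠ j} × S) ⊕ S}
    {h : C.mode f = .inr ⟨j, o⟩} {ps ps' : {i // i ≠ j} → Tm O ar} {c c' : WTm C} {m : ℕ}
    (hc : ∀ k ≤ m, ob.SimAt (L2Model C) k c c')
    (hcont : ∀ l < m, ∀ (t : OTm O ar {i // i ≠ j}) s,
      ob.SimAt (L2Model C) l (.run (t.subst ps) s) (.run (t.subst ps') s)) :
    ob.SimAt (L2Model C) m (.act f j o h ps c) (.act f j o h ps' c') := by
  intro w hw hE
  rcases trcEntry_act_iff.1 hE with ⟨s, hs, rfl⟩ | ⟨s', hs', rfl⟩ |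
    ⟨k, l, s', t, s'', rfl, hs', ho, hl⟩
  · obtain ⟨n', hn, hs⟩ := hc m le_rfl _ hw hs
    exact ⟨n', hn, trcEntry_act_iff.2 (.inl ⟨s, hs, rfl⟩)⟩
  · obtain ⟨n', hn, hs'⟩ := hc m le_rfl _ (ob.visible_inr s') hs'
    exact ⟨n', hn, trcEntry_act_iff.2 (.inr (.inl ⟨s', hs', rfl⟩))⟩
  · obtain ⟨k', hk, hs'⟩ := hc k (by omega) _ (ob.visible_inr s') hs'
    obtain ⟨l', hl', hl⟩ := hcont l (by omega) t s'' w hw hl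
    exact ⟨k' + 1 + l', ob.shift_add hk hl',
      trcEntry_act_iff.2 (.inr (.inr ⟨k', l', s', t, s'', rfl, hs', ho, hl⟩))⟩

theorem simAt_subst {V : Type} {σ σ' : V → Tm O ar}
    (hσ : ∀ v s, ob.Sim (L2Model C) (.run (σ v) s) (.run (σ' v) s)) (m : ℕ) (t : OTm O ar V)
    (s : S) : ob.SimAt (L2Model C) m (.run (t.subst σ) s) (.run (t.subst σ') s) := by
  induction m using Nat.strong_induction_on generalizing t s with
  | _ m IHm =>
  induction t generalizing s with
  | var v => exact hσ v s m
  | op f bs iht =>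
    rw [simAt_iff_of_tauTr (tauTr_run _ s) (tauTr_run _ s)]
    rcases hf : C.mode f with o | ⟨j, o⟩
    · rcases ho : o s with ⟨t, s'⟩ | s'
      · rw [OTm.subst, OTm.subst, rstep2_op_of_passive_out hf ho, rstep2_op_of_passive_out hf ho]
        cases m with
        | zero => exact simAt_zero_of_outTr rfl rfl
        | succ m =>
          refine simAt_succ_of_outTr rfl rfl ?_
          rw [← OTm.subst_subst, ← OTm.subst_subst]
          exact IHm m m.lt_succ_self _ _
      · rw [OTm.subst, OTm.subst, rstep2_op_of_passive_ret hf ho, rstep2_op_of_passive_ret hf ho]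
        exact simAt_of_downTr rfl rfl
    · rw [OTm.subst, OTm.subst, rstep2_op_of_active hf, rstep2_op_of_active hf]
      refine simAt_act (fun k hk => ?_) fun l hl t s => ?_
      · rcases hk.lt_or_eq with hk | rfl
        · exact IHm k hk _ _
        · exact iht j s
      · rw [← OTm.subst_subst, ← OTm.subst_subst]
        exact IHm l hl _ _

theorem sim_act {f : O} {j : Fin (ar f)} {o : S → (OTm O ar {i // i ≠ j} × S) ⊕ S}
    {h : C.mode f = .inr ⟨j, o⟩} {ps ps' : {i // i ≠ j} → Tm O ar} {c c' : WTm C}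
    (hps : ∀ v s, ob.Sim (L2Model C) (.run (ps v) s) (.run (ps' v) s))
    (hc : ob.Sim (L2Model C) c c') :
    ob.Sim (L2Model C) (.act f j o h ps c) (.act f j o h ps' c') :=
  fun _ => simAt_act (fun k _ => hc k) fun l _ t s => simAt_subst hps l t s

theorem sim_run_op {f : O} {as as' : Fin (ar f) → Tm O ar}
    (has : ∀ i s, ob.Sim (L2Model C) (.run (as i) s) (.run (as' i) s)) (s : S) :
    ob.Sim (L2Model C) (.run (.op f as) s) (.run (.op f as') s) :=
  fun m => simAt_subst has m (.op f .var) s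

theorem isCongrL2_of_sim (ob : Observation S) {Er : Tm O ar → Tm O ar → Prop}
    {Ew : WTm C → WTm C → Prop}
    (hEw : ∀ c c', Ew c c' ↔ ob.Sim (L2Model C) c c' ∧ ob.Sim (L2Model C) c' c)
    (hEr : ∀ p p', Er p p' ↔ ∀ s, Ew (.run p s) (.run p' s)) : IsCongrL2 C Er Ew := by
  simp only [IsCongrL2, hEr, hEw]
  refine ⟨fun f as as' has s => ⟨sim_run_op (fun i s => (has i s).1) s,
      sim_run_op (fun i s => (has i s).2) s⟩,
    fun p p' s h => h s,
    fun s => ⟨fun _ => simAt_of_downTr rfl rfl, fun _ => simAt_of_downTr rfl rfl⟩,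
    fun s c c' h => ⟨sim_of_outTr rfl rfl h.1, sim_of_outTr rfl rfl h.2⟩,
    fun f j o h ps ps' c c' hps hc => ⟨sim_act (fun v s => (hps v s).1) hc.1,
      sim_act (fun v s => (hps v s).2) hc.2⟩⟩

end Congruence

/-- for every cool stateful SOS specification, trace equivalence,
cost equivalence and termination equivalence are congruences on the operational
model of its reader–writer extension `L²`. -/
theorem l2_congruence (C : CoolSpec O ar S) :
    IsCongrL2 C (fun p p' => trcR (L2Model C) p = trcR (L2Model C) p')
      (fun c c' => trcW (L2Model C) c = trcW (L2Model C) c') ∧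
    IsCongrL2 C (fun p p' => cstR (L2Model C) p = cstR (L2Model C) p')
      (fun c c' => cstW (L2Model C) c = cstW (L2Model C) c') ∧
    IsCongrL2 C (fun p p' => terR (L2Model C) p = terR (L2Model C) p')
      (fun c c' => terW (L2Model C) c = terW (L2Model C) c') := by
  refine ⟨isCongrL2_of_sim .trace (fun _ _ => Observation.trcW_eq_iff) fun _ _ => ?_,
    isCongrL2_of_sim .cost (fun _ _ => Observation.cstW_eq_iff) fun _ _ => ?_,
    isCongrL2_of_sim .termination (fun _ _ => Observation.terW_eq_iff) fun _ _ => ?_⟩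
  · simp only [funext_iff, trcR_eq_trcW_run]
  · simp only [funext_iff, cstR_eq_cstW_run]
  · simp only [funext_iff, terR_eq_terW_run]

end SOS
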